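/- Assume that for any two first-order formulas φ and ψ (possibly with predicate symbols) such that φ ∧ ψ is unsatisfiable, there exists a Lyndon interpolant. Then for any first-order alternating automaton A and any input event sequence α = a₁…aₙ ∈ Σ* such that the acceptance formula Υ(α) is unsatisfiable, there exists a local generalized Lyndon interpolant (I₀,…,Iₙ) for α, i.e., one in which the vocabulary of each Iₖ is contained in the time-stamped predicates Q⁽ᵏ⁾. -/

import Mathlib

set_option maxHeartbeats 1000000
set_option autoImplicit false

open scoped Classical

noncomputable section

namespace FOADA

/-! ### Terms over a data domain `D` (all function symbols have a fixed interpretation) -/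

inductive Term (D : Type) (V : Type) : Type where
  | var : V → Term D V
  | app : {n : ℕ} → ((Fin n → D) → D) → (Fin n → Term D V) → Term D V

namespace Term

variable {D V W : Type}

def eval (ν : V → D) : Term D V → D
  | var v => ν v
  | app f ts => f fun i => (ts i).eval ν

def rename (f : V → W) : Term D V → Term D W
  | var v => var (f v)
  | app g ts => app g fun i => (ts i).rename f

def subst (σ : V → Term D W) : Term D V → Term D W
  | var v => σ v
  | app g ts => app g fun i => (ts i).subst σ

def vars : Term D V → Set V
  | var v => {v}
  | app _ ts => ⋃ i, (ts i).vars

def const (d : D) : Term D V := app (n := 0) (fun _ => d) Fin.elim0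

end Term

/-! ### Interpretations, configurations and cubes -/

def Interp (D Q : Type) (ar : Q → ℕ) : Type := ∀ q : Q, Set (Fin (ar q) → D)

def Interp.le {D Q : Type} {ar : Q → ℕ} (I J : Interp D Q ar) : Prop := ∀ q, I q ⊆ J q

/-- Configurations `q(d₁,…,d_{#q})`. -/
def Config (D Q : Type) (ar : Q → ℕ) : Type := Σ q : Q, Fin (ar q) → D

/-- The cube of an interpretation. -/
def Interp.cube {D Q : Type} {ar : Q → ℕ} (I : Interp D Q ar) : Set (Config D Q ar) :=
  {c | c.2 ∈ I c.1}

/-! ### First-order formulas with uninterpreted predicate symbols -/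

inductive Fml (D Q : Type) (ar : Q → ℕ) : Type → Type 1 where
  | eq : {V : Type} → Term D V → Term D V → Fml D Q ar V
  | pred : {V : Type} → (q : Q) → (Fin (ar q) → Term D V) → Fml D Q ar V
  | not : {V : Type} → Fml D Q ar V → Fml D Q ar V
  | and : {V : Type} → Fml D Q ar V → Fml D Q ar V → Fml D Q ar V
  | ex : {V : Type} → Fml D Q ar (Option V) → Fml D Q ar V

namespace Fml

variable {D Q : Type} {ar : Q → ℕ}

/-- The satisfaction relation `I, ν ⊨ φ`. -/
def Sat (I : Interp D Q ar) : {V : Type} → Fml D Q ar V → (V → D) → Prop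
  | _, .eq t s, ν => t.eval ν = s.eval ν
  | _, .pred q ts, ν => (fun i => (ts i).eval ν) ∈ I q
  | _, .not φ, ν => ¬ Sat I φ ν
  | _, .and φ ψ, ν => Sat I φ ν ∧ Sat I ψ ν
  | _, .ex φ, ν => ∃ d : D, Sat I φ fun o => o.elim d ν

def tt [Nonempty D] {V : Type} : Fml D Q ar V :=
  .eq (Term.const (Classical.arbitrary D)) (Term.const (Classical.arbitrary D))

def ff [Nonempty D] {V : Type} : Fml D Q ar V := .not tt

def or {V : Type} (φ ψ : Fml D Q ar V) : Fml D Q ar V := .not (.and (.not φ) (.not ψ))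

def imp {V : Type} (φ ψ : Fml D Q ar V) : Fml D Q ar V := .not (.and φ (.not ψ))

def all {V : Type} (φ : Fml D Q ar (Option V)) : Fml D Q ar V := .not (.ex (.not φ))

def conj [Nonempty D] {V : Type} : List (Fml D Q ar V) → Fml D Q ar V
  | [] => tt
  | φ :: l => .and φ (conj l)

def disj [Nonempty D] {V : Type} : List (Fml D Q ar V) → Fml D Q ar V
  | [] => ff
  | φ :: l => or φ (disj l)

def rename : {V W : Type} → (V → W) → Fml D Q ar V → Fml D Q ar W
  | _, _, f, .eq t s => .eq (t.rename f) (s.rename f)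
  | _, _, f, .pred q ts => .pred q fun i => (ts i).rename f
  | _, _, f, .not φ => .not (rename f φ)
  | _, _, f, .and φ ψ => .and (rename f φ) (rename f ψ)
  | _, _, f, .ex φ => .ex (rename (Option.map f) φ)

def substVar : {V W : Type} → (V → Term D W) → Fml D Q ar V → Fml D Q ar W
  | _, _, σ, .eq t s => .eq (t.subst σ) (s.subst σ)
  | _, _, σ, .pred q ts => .pred q fun i => (ts i).subst σ
  | _, _, σ, .not φ => .not (substVar σ φ)
  | _, _, σ, .and φ ψ => .and (substVar σ φ) (substVar σ ψ)
  | _, _, σ, .ex φ =>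
      .ex (substVar (fun o => Option.elim o (.var none) fun v => (σ v).rename some) φ)

/-- Existential quantification of a block of variables. -/
def exN : {V : Type} → {k : ℕ} → Fml D Q ar (V ⊕ Fin k) → Fml D Q ar V
  | _, 0, φ => φ.rename (Sum.elim id Fin.elim0)
  | _, k + 1, φ =>
      exN (k := k) (.ex (φ.rename fun v =>
        match v with
        | Sum.inl v => some (Sum.inl v)
        | Sum.inr j => Fin.lastCases none (fun i => some (Sum.inr i)) j))

/-- Universal quantification of a block of variables. -/
def allN {V : Type} {k : ℕ} (φ : Fml D Q ar (V ⊕ Fin k)) : Fml D Q ar V :=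
  .not (exN (.not φ))

/-- `Polarity φ b` : every predicate occurrence in `φ` has polarity `b`
(`b = true` : under an even number of negations). -/
def Polarity : {V : Type} → Fml D Q ar V → Bool → Prop
  | _, .eq _ _, _ => True
  | _, .pred _ _, b => b = true
  | _, .not φ, b => Polarity φ (!b)
  | _, .and φ ψ, b => Polarity φ b ∧ Polarity ψ b
  | _, .ex φ, b => Polarity φ b

/-- A formula is positive if every predicate symbol occurs under an even number of negations. -/
def Positive {V : Type} (φ : Fml D Q ar V) : Prop := φ.Polarity true

/-- Free variables of a formula. -/
def fv : {V : Type} → Fml D Q ar V → Set V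
  | _, .eq t s => t.vars ∪ s.vars
  | _, .pred _ ts => ⋃ i, (ts i).vars
  | _, .not φ => fv φ
  | _, .and φ ψ => fv φ ∪ fv ψ
  | _, .ex φ => {v | some v ∈ fv φ}

/-- Predicate symbols occurring in a formula. -/
def preds : {V : Type} → Fml D Q ar V → Set Q
  | _, .eq _ _ => ∅
  | _, .pred q _ => {q}
  | _, .not φ => preds φ
  | _, .and φ ψ => preds φ ∪ preds ψ
  | _, .ex φ => preds φ

/-- Predicate symbols occurring with polarity `b` (`true` = even number of negations). -/
def predsPol : Bool → {V : Type} → Fml D Q ar V → Set Q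
  | _, _, .eq _ _ => ∅
  | b, _, .pred q _ => if b then {q} else ∅
  | b, _, .not φ => predsPol (!b) φ
  | b, _, .and φ ψ => predsPol b φ ∪ predsPol b ψ
  | b, _, .ex φ => predsPol b φ

/-- Number of predicate atom occurrences. -/
def atomCount : {V : Type} → Fml D Q ar V → ℕ
  | _, .eq _ _ => 0
  | _, .pred _ _ => 1
  | _, .not φ => atomCount φ
  | _, .and φ ψ => atomCount φ + atomCount ψ
  | _, .ex φ => atomCount φ

/-- No predicate atom with symbol `q0` occurs. -/
def noPredOcc (q0 : Q) : {V : Type} → Fml D Q ar V → Prop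
  | _, .eq _ _ => True
  | _, .pred q _ => q ≠ q0
  | _, .not φ => noPredOcc q0 φ
  | _, .and φ ψ => noPredOcc q0 φ ∧ noPredOcc q0 ψ
  | _, .ex φ => noPredOcc q0 φ

/-- The size of a formula. -/
def size : {V : Type} → Fml D Q ar V → ℕ
  | _, .eq _ _ => 1
  | _, .pred _ _ => 1
  | _, .not φ => size φ + 1
  | _, .and φ ψ => size φ + size ψ + 1
  | _, .ex φ => size φ + 1

/-- The dual of a (positive) formula. -/
def dual : {V : Type} → Fml D Q ar V → Fml D Q ar V
  | _, .eq t s => .not (.eq t s)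
  | _, .pred q ts => .pred q ts
  | _, .not φ => .not (dual φ)
  | _, .and φ ψ => or (dual φ) (dual ψ)
  | _, .ex φ => .not (.ex (.not (dual φ)))

/-- Map predicate symbols along an arity-preserving function. -/
def mapPred {Q' : Type} {ar' : Q' → ℕ} (f : Q → Q') (h : ∀ q, ar' (f q) = ar q) :
    {V : Type} → Fml D Q ar V → Fml D Q' ar' V
  | _, .eq t s => .eq t s
  | _, .pred q ts => .pred (f q) fun i => ts (Fin.cast (h q) i)
  | _, .not φ => .not (mapPred f h φ)
  | _, .and φ ψ => .and (mapPred f h φ) (mapPred f h ψ)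
  | _, .ex φ => .ex (mapPred f h φ)

/-- Substitute, for every predicate atom `q(t̄)`, the formula `σ q` with parameters
instantiated by `t̄` (plus a fixed set `V0` of "global" variables embedded by `ρ`). -/
def substPred {Q' : Type} {ar' : Q' → ℕ} {V0 : Type}
    (σ : ∀ q : Q, Fml D Q' ar' (V0 ⊕ Fin (ar q))) :
    {V : Type} → (V0 → V) → Fml D Q ar V → Fml D Q' ar' V
  | _, _, .eq t s => .eq t s
  | _, ρ, .pred q ts => (σ q).substVar (Sum.elim (fun v0 => .var (ρ v0)) fun i => ts i)
  | _, ρ, .not φ => .not (substPred σ ρ φ)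
  | _, ρ, .and φ ψ => .and (substPred σ ρ φ) (substPred σ ρ ψ)
  | _, ρ, .ex φ => .ex (substPred σ (fun v0 => some (ρ v0)) φ)

/-- Replace, in place, every atom of the single predicate `q0` by the instance of `ψ`;
all other predicate atoms are kept. -/
def replaceP [DecidableEq Q] (q0 : Q) {V0 : Type} (ψ : Fml D Q ar (V0 ⊕ Fin (ar q0))) :
    {V : Type} → (V0 → V) → Fml D Q ar V → Fml D Q ar V
  | _, _, .eq t s => .eq t s
  | _, ρ, .pred q ts =>
      if h : q = q0 then
        ψ.substVar (Sum.elim (fun v0 => .var (ρ v0))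
          fun i => ts (Fin.cast (congrArg ar h.symm) i))
      else .pred q ts
  | _, ρ, .not φ => .not (replaceP q0 ψ ρ φ)
  | _, ρ, .and φ ψ' => .and (replaceP q0 ψ ρ φ) (replaceP q0 ψ ρ ψ')
  | _, ρ, .ex φ => .ex (replaceP q0 ψ (fun v0 => some (ρ v0)) φ)

end Fml

/-- Minimal models of a formula under a valuation. -/
def MinModels {D Q : Type} {ar : Q → ℕ} {V : Type} (φ : Fml D Q ar V) (ν : V → D) :
    Set (Interp D Q ar) :=
  {I | φ.Sat I ν ∧ ∀ J : Interp D Q ar, φ.Sat J ν → J.le I → J = I}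


/-! ### Polarity lemmas (used to discharge positivity side conditions) -/

namespace Fml

variable {D Q : Type} {ar : Q → ℕ}

theorem polarity_tt [Nonempty D] {V : Type} (_b : Bool) : (tt : Fml D Q ar V).Polarity _b :=
  trivial

theorem polarity_ff [Nonempty D] {V : Type} (_b : Bool) : (ff : Fml D Q ar V).Polarity _b :=
  trivial

theorem polarity_or {V : Type} {φ ψ : Fml D Q ar V} {b : Bool}
    (h1 : φ.Polarity b) (h2 : ψ.Polarity b) : (or φ ψ).Polarity b := by
  simpa [or, Polarity, Bool.not_not] using And.intro h1 h2

theorem polarity_conj [Nonempty D] {V : Type} :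
    ∀ (l : List (Fml D Q ar V)) (b : Bool), (∀ φ ∈ l, φ.Polarity b) → (conj l).Polarity b
  | [], _, _ => trivial
  | φ :: l, b, h =>
      ⟨h φ List.mem_cons_self,
        polarity_conj l b fun ψ hψ => h ψ (List.mem_cons_of_mem _ hψ)⟩

theorem polarity_disj [Nonempty D] {V : Type} :
    ∀ (l : List (Fml D Q ar V)) (b : Bool), (∀ φ ∈ l, φ.Polarity b) → (disj l).Polarity b
  | [], _, _ => trivial
  | φ :: l, b, h =>
      polarity_or (h φ List.mem_cons_self)
        (polarity_disj l b fun ψ hψ => h ψ (List.mem_cons_of_mem _ hψ))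

theorem polarity_rename :
    ∀ {V W : Type} (f : V → W) (φ : Fml D Q ar V) (b : Bool),
      φ.Polarity b → (φ.rename f).Polarity b
  | _, _, _, .eq _ _, _, _ => trivial
  | _, _, _, .pred _ _, _, hb => hb
  | _, _, f, .not φ, b, hb => polarity_rename f φ (!b) hb
  | _, _, f, .and φ ψ, b, hb =>
      ⟨polarity_rename f φ b hb.1, polarity_rename f ψ b hb.2⟩
  | _, _, f, .ex φ, b, hb => polarity_rename (Option.map f) φ b hb

theorem polarity_mapPred {Q' : Type} {ar' : Q' → ℕ} (f : Q → Q') (h : ∀ q, ar' (f q) = ar q) :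
    ∀ {V : Type} (φ : Fml D Q ar V) (b : Bool), φ.Polarity b → (φ.mapPred f h).Polarity b
  | _, .eq _ _, _, _ => trivial
  | _, .pred _ _, _, hb => hb
  | _, .not φ, b, hb => polarity_mapPred f h φ (!b) hb
  | _, .and φ ψ, b, hb =>
      ⟨polarity_mapPred f h φ b hb.1, polarity_mapPred f h ψ b hb.2⟩
  | _, .ex φ, b, hb => polarity_mapPred f h φ b hb

theorem polarity_dual :
    ∀ {V : Type} (φ : Fml D Q ar V) (b : Bool), φ.Polarity b → (φ.dual).Polarity b
  | _, .eq _ _, _, _ => trivial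
  | _, .pred _ _, _, hb => hb
  | _, .not φ, b, hb => polarity_dual φ (!b) hb
  | _, .and φ ψ, b, hb => by
      have h1 := polarity_dual φ b hb.1
      have h2 := polarity_dual ψ b hb.2
      simpa [dual, or, Polarity, Bool.not_not] using And.intro h1 h2
  | _, .ex φ, b, hb => by
      have h := polarity_dual φ b hb
      simpa [dual, Polarity, Bool.not_not] using h

end Fml

/-! ### First-order alternating automata -/

/-- Data words over input events `Sig` and input variables `X`. -/
abbrev DWord (Sig X D : Type) := List (Sig × (X → D))

/-- A first-order alternating automaton `A = ⟨Σ, X, Q, ι, F, Δ⟩`.  The (finitely many)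
control predicates are the inhabitants of `Q`, enumerated by `QList`; there is exactly one
transition rule `q(y₁,…,y_{#q}) →^{a(X)} δ q a` per pair `(q,a)` (several rules can be
joined by disjunction, a missing rule is an unsatisfiable one). -/
structure FOAA (Sig X D : Type) : Type 1 where
  Q : Type
  QList : List Q
  QList_mem : ∀ q : Q, q ∈ QList
  ar : Q → ℕ
  init : Fml D Q ar Empty
  init_pos : init.Positive
  F : Set Q
  delta : (q : Q) → Sig → Fml D Q ar (X ⊕ Fin (ar q))
  delta_pos : ∀ q a, (delta q a).Positive

namespace FOAA

variable {Sig X D : Type} (A : FOAA Sig X D)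

abbrev Cfg := Config D A.Q A.ar

/-- An execution of `A` over the data word `w`, starting with the cube `c`, represented as
the (prefix-closed) set of its paths of configurations.  The children of each node at
level `j < |w|` form a cube of a minimal model of the corresponding transition formula. -/
structure IsExec (w : DWord Sig X D) (c : Set A.Cfg) (T : Set (List A.Cfg)) : Prop where
  not_nil : [] ∉ T
  prefix_closed : ∀ p ∈ T, ∀ p' : List A.Cfg, p' ≠ [] → p' <+: p → p' ∈ T
  roots : {cf : A.Cfg | [cf] ∈ T} = c
  depth : ∀ p ∈ T, p.length ≤ w.length + 1
  children : ∀ (p : List A.Cfg) (q : A.Q) (d : Fin (A.ar q) → D),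
    p ++ [⟨q, d⟩] ∈ T → ∀ hl : p.length < w.length,
    ∃ I ∈ MinModels (A.delta q (w.get ⟨p.length, hl⟩).1)
        (Sum.elim (w.get ⟨p.length, hl⟩).2 d),
      {cf : A.Cfg | (p ++ [⟨q, d⟩]) ++ [cf] ∈ T} = I.cube

/-- An accepting execution: all paths have length `|w|` and the frontier is labeled with
final configurations. -/
structure IsAccExec (w : DWord Sig X D) (c : Set A.Cfg) (T : Set (List A.Cfg))
    extends A.IsExec w c T : Prop where
  total : ∀ p ∈ T, p.length ≤ w.length → ∃ cf : A.Cfg, p ++ [cf] ∈ T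
  final : ∀ (p : List A.Cfg) (q : A.Q) (d : Fin (A.ar q) → D),
    p ++ [⟨q, d⟩] ∈ T → p.length = w.length → q ∈ A.F

/-- `A` accepts `w` iff it has an accepting execution over `w` starting with a cube of a
minimal model of the initial sentence. -/
def Accepts (w : DWord Sig X D) : Prop :=
  ∃ I ∈ MinModels A.init (fun v : Empty => v.elim),
    ∃ T : Set (List A.Cfg), A.IsAccExec w I.cube T

def Lang : Set (DWord Sig X D) := {w | A.Accepts w}

end FOAA

/-! ### Time-stamping and path formulas -/

/-- Time-stamping of predicate symbols : `φ⁽ⁱ⁾`. -/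
def stampF {D Q : Type} {ar : Q → ℕ} (i : ℕ) :
    {V : Type} → Fml D Q ar V → Fml D (ℕ × Q) (fun p => ar p.2) V
  | _, .eq t s => .eq t s
  | _, .pred q ts => .pred (i, q) ts
  | _, .not φ => .not (stampF i φ)
  | _, .and φ ψ => .and (stampF i φ) (stampF i ψ)
  | _, .ex φ => .ex (stampF i φ)

/-- The valuation `w_D` of the time-stamped input variables `x⁽ⁱ⁾ ↦ νᵢ(x)`. -/
def wD {Sig X D : Type} [Nonempty D] (w : DWord Sig X D) : (ℕ × X) → D := fun p =>
  if h : 1 ≤ p.1 ∧ p.1 - 1 < w.length then (w.get ⟨p.1 - 1, h.2⟩).2 p.2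
  else Classical.arbitrary D

namespace FOAA

variable {Sig X D : Type} (A : FOAA Sig X D)

/-- The time-stamped right-hand side `ψ⁽ⁱ⁾` of the transition rule for `(q, a)`. -/
def ruleF (i : ℕ) (q : A.Q) (a : Sig) :
    Fml D (ℕ × A.Q) (fun p => A.ar p.2) ((ℕ × X) ⊕ Fin (A.ar q)) :=
  (stampF i (A.delta q a)).rename (Sum.map (fun x => (i, x)) id)

/-- `⋀_{q(ȳ) →^{a(X)} ψ ∈ Δ} ∀ȳ. q⁽ᵏ⁾(ȳ) → ψ⁽ᵏ⁺¹⁾`. -/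
def stepFml [Nonempty D] (k : ℕ) (a : Sig) :
    Fml D (ℕ × A.Q) (fun p => A.ar p.2) (ℕ × X) :=
  Fml.conj <| A.QList.map fun q =>
    Fml.allN (Fml.imp (.pred (k, q) fun i => .var (Sum.inr i)) (A.ruleF (k + 1) q a))

/-- `⋀_{q ∈ Q∖F} ∀ȳ. q⁽ⁿ⁾(ȳ) → ⊥`. -/
def finalFml [Nonempty D] (n : ℕ) : Fml D (ℕ × A.Q) (fun p => A.ar p.2) (ℕ × X) :=
  Fml.conj <| A.QList.map fun q =>
    if q ∈ A.F then Fml.tt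
    else Fml.allN (Fml.imp (.pred (n, q) fun i => .var (Sum.inr i)) Fml.ff)

/-- The path formula `Θ(α)`. -/
def theta [Nonempty D] (α : List Sig) : Fml D (ℕ × A.Q) (fun p => A.ar p.2) (ℕ × X) :=
  .and ((stampF 0 A.init).rename fun v : Empty => v.elim)
    (Fml.conj <| (List.finRange α.length).map fun j => A.stepFml j.val (α.get j))

/-- The acceptance formula `Υ(α)`. -/
def upsilon [Nonempty D] (α : List Sig) : Fml D (ℕ × A.Q) (fun p => A.ar p.2) (ℕ × X) :=
  .and (A.theta α) (A.finalFml α.length)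

/-- The interpretation `I_T` of the time-stamped predicates associated with an execution
(represented by its set of paths). -/
def execInterp (T : Set (List A.Cfg)) : Interp D (ℕ × A.Q) (fun p => A.ar p.2) :=
  fun p => {d | ∃ pf : List A.Cfg, pf.length = p.1 ∧ pf ++ [⟨p.2, d⟩] ∈ T}

end FOAA

/-! ### Predicate-free acceptance formulas `Φ̂(α)` -/

namespace FOAA

variable {Sig X D : Type} (A : FOAA Sig X D)

/-- `Φ̂ₙ(αᵢ)` for `i = α.length` : obtained from `ι⁽⁰⁾` by repeatedly substituting, for every
predicate atom `q⁽ⁱ⁻¹⁾(t̄)`, the formula `ψ⁽ⁱ⁾[t̄/ȳ]` of the corresponding transition rule.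
Since all predicate atoms of the `i`-th formula carry the stamp `i`, the stamps of
predicates are kept implicit. -/
def phiHatN [Nonempty D] (α : List Sig) : Fml D A.Q A.ar (ℕ × X) :=
  (List.finRange α.length).foldl
    (fun acc j =>
      Fml.substPred
        (fun q => (A.delta q (α.get j)).rename (Sum.map (fun x => (j.val + 1, x)) id))
        id acc)
    (A.init.rename fun v : Empty => v.elim)

/-- `Φ̂(α)` : additionally replace every remaining atom `q⁽ⁿ⁾(t̄)` by `⊥` if `q ∉ F` and by
`⊤` if `q ∈ F`.  The result contains no predicate symbols. -/
def phiHat [Nonempty D] (α : List Sig) :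
    Fml D Empty (fun e => e.elim) (ℕ × X) :=
  Fml.substPred (fun q => if q ∈ A.F then Fml.tt else Fml.ff) id (A.phiHatN α)

end FOAA

/-- The unique interpretation over an empty set of predicate symbols. -/
def emptyInterp (D : Type) : Interp D Empty (fun e => e.elim) := fun q => q.elim

/-! ### Size, intersection and complementation of automata -/

namespace FOAA

variable {Sig X D : Type}

/-- `|A| = |ι| + Σ_{rules} |ψ|`. -/
def size [Fintype Sig] (A : FOAA Sig X D) : ℕ :=
  A.init.size + (A.QList.map fun q => ∑ a : Sig, (A.delta q a).size).sum

/-- The intersection automaton `A∩` (disjointness of the predicate sets is modeled by a sum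
type). -/
def inter (A₁ A₂ : FOAA Sig X D) : FOAA Sig X D where
  Q := A₁.Q ⊕ A₂.Q
  QList := A₁.QList.map Sum.inl ++ A₂.QList.map Sum.inr
  QList_mem := by
    intro q
    cases q with
    | inl q => exact List.mem_append_left _ (List.mem_map_of_mem (A₁.QList_mem q))
    | inr q => exact List.mem_append_right _ (List.mem_map_of_mem (A₂.QList_mem q))
  ar := Sum.elim A₁.ar A₂.ar
  init := .and (Fml.mapPred Sum.inl (fun _ => rfl) A₁.init)
               (Fml.mapPred Sum.inr (fun _ => rfl) A₂.init)
  init_pos := by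
    exact ⟨Fml.polarity_mapPred (Q' := A₁.Q ⊕ A₂.Q) (ar' := Sum.elim A₁.ar A₂.ar)
        Sum.inl (fun _ => rfl) A₁.init true A₁.init_pos,
      Fml.polarity_mapPred (Q' := A₁.Q ⊕ A₂.Q) (ar' := Sum.elim A₁.ar A₂.ar)
        Sum.inr (fun _ => rfl) A₂.init true A₂.init_pos⟩
  F := Sum.inl '' A₁.F ∪ Sum.inr '' A₂.F
  delta := fun q a =>
    match q with
    | Sum.inl q₁ => Fml.mapPred Sum.inl (fun _ => rfl) (A₁.delta q₁ a)
    | Sum.inr q₂ => Fml.mapPred Sum.inr (fun _ => rfl) (A₂.delta q₂ a)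
  delta_pos := by
    intro q a
    cases q with
    | inl q₁ =>
        exact Fml.polarity_mapPred (Q' := A₁.Q ⊕ A₂.Q) (ar' := Sum.elim A₁.ar A₂.ar)
          Sum.inl (fun _ => rfl) (A₁.delta q₁ a) true (A₁.delta_pos q₁ a)
    | inr q₂ =>
        exact Fml.polarity_mapPred (Q' := A₁.Q ⊕ A₂.Q) (ar' := Sum.elim A₁.ar A₂.ar)
          Sum.inr (fun _ => rfl) (A₂.delta q₂ a) true (A₂.delta_pos q₂ a)

/-- The dual automaton `Ā`. -/
def dualA (A : FOAA Sig X D) : FOAA Sig X D where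
  Q := A.Q
  QList := A.QList
  QList_mem := A.QList_mem
  ar := A.ar
  init := A.init.dual
  init_pos := Fml.polarity_dual A.init true A.init_pos
  F := A.Fᶜ
  delta := fun q a => (A.delta q a).dual
  delta_pos := fun q a => Fml.polarity_dual (A.delta q a) true (A.delta_pos q a)

end FOAA

/-! ### Quantifier-free formulas and prenex forms -/

inductive QF (D Q : Type) (ar : Q → ℕ) (V : Type) : Type where
  | eq : Term D V → Term D V → QF D Q ar V
  | pred : (q : Q) → (Fin (ar q) → Term D V) → QF D Q ar V
  | not : QF D Q ar V → QF D Q ar V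
  | and : QF D Q ar V → QF D Q ar V → QF D Q ar V

namespace QF

variable {D Q : Type} {ar : Q → ℕ} {V W : Type}

def Sat (I : Interp D Q ar) : QF D Q ar V → (V → D) → Prop
  | .eq t s, ν => t.eval ν = s.eval ν
  | .pred q ts, ν => (fun i => (ts i).eval ν) ∈ I q
  | .not φ, ν => ¬ Sat I φ ν
  | .and φ ψ, ν => Sat I φ ν ∧ Sat I ψ ν

def rename (f : V → W) : QF D Q ar V → QF D Q ar W
  | .eq t s => .eq (t.rename f) (s.rename f)
  | .pred q ts => .pred q fun i => (ts i).rename f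
  | .not φ => .not (φ.rename f)
  | .and φ ψ => .and (φ.rename f) (ψ.rename f)

def subst (σ : V → Term D W) : QF D Q ar V → QF D Q ar W
  | .eq t s => .eq (t.subst σ) (s.subst σ)
  | .pred q ts => .pred q fun i => (ts i).subst σ
  | .not φ => .not (φ.subst σ)
  | .and φ ψ => .and (φ.subst σ) (ψ.subst σ)

def imp (φ ψ : QF D Q ar V) : QF D Q ar V := .not (.and φ (.not ψ))

def toFml : QF D Q ar V → Fml D Q ar V
  | .eq t s => .eq t s
  | .pred q ts => .pred q ts
  | .not φ => .not φ.toFml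
  | .and φ ψ => .and φ.toFml ψ.toFml

/-- The list of predicate atoms occurring in a quantifier-free formula. -/
def atoms : QF D Q ar V → List (Σ q : Q, Fin (ar q) → Term D V)
  | .eq _ _ => []
  | .pred q ts => [⟨q, ts⟩]
  | .not φ => φ.atoms
  | .and φ ψ => φ.atoms ++ ψ.atoms

def fv : QF D Q ar V → Set V
  | .eq t s => t.vars ∪ s.vars
  | .pred _ ts => ⋃ i, (ts i).vars
  | .not φ => φ.fv
  | .and φ ψ => φ.fv ∪ ψ.fv

def predsPol (b : Bool) : QF D Q ar V → Set Q
  | .eq _ _ => ∅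
  | .pred q _ => if b then {q} else ∅
  | .not φ => φ.predsPol (!b)
  | .and φ ψ => φ.predsPol b ∪ ψ.predsPol b

def Polarity : QF D Q ar V → Bool → Prop
  | .eq _ _, _ => True
  | .pred _ _, b => b = true
  | .not φ, b => φ.Polarity (!b)
  | .and φ ψ, b => φ.Polarity b ∧ ψ.Polarity b

def Positive (φ : QF D Q ar V) : Prop := φ.Polarity true

/-- In-place replacement of the atoms of predicate `q0` by instances of a formula. -/
def replaceAtom [DecidableEq Q] (q0 : Q) (χ : (Fin (ar q0) → Term D V) → Fml D Q ar V) :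
    QF D Q ar V → Fml D Q ar V
  | .eq t s => .eq t s
  | .pred q ts =>
      if h : q = q0 then χ (fun i => ts (Fin.cast (congrArg ar h.symm) i))
      else .pred q ts
  | .not φ => .not (replaceAtom q0 χ φ)
  | .and φ ψ => .and (replaceAtom q0 χ φ) (replaceAtom q0 χ ψ)

end QF

/-- Semantics of a quantifier prefix : the `j`-th entry of `pre` binds the prenex variable
of index `j` (`true` = ∃, `false` = ∀). -/
def quantSem {D : Type} : List Bool → ℕ → ((ℕ → D) → Prop) → (ℕ → D) → Prop
  | [], _, P, g => P g
  | b :: rest, j, P, g =>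
      if b then ∃ d : D, quantSem rest (j + 1) P (Function.update g j d)
      else ∀ d : D, quantSem rest (j + 1) P (Function.update g j d)

/-- A formula in prenex form: a quantifier prefix binding the prenex variables
(the `ℕ` summand of the variables of the matrix). -/
structure PF (D Q : Type) (ar : Q → ℕ) (V : Type) : Type where
  pre : List Bool
  mat : QF D Q ar (V ⊕ ℕ)

namespace PF

variable {D Q : Type} {ar : Q → ℕ} {V : Type}

def Sat [Nonempty D] (I : Interp D Q ar) (φ : PF D Q ar V) (ν : V → D) : Prop :=
  quantSem φ.pre 0 (fun g => φ.mat.Sat I (Sum.elim ν g)) fun _ => Classical.arbitrary D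

end PF

/-- Prenex normal form. -/
def prenex {D Q : Type} {ar : Q → ℕ} : {V : Type} → Fml D Q ar V → PF D Q ar V
  | _, .eq t s => ⟨[], .eq (t.rename Sum.inl) (s.rename Sum.inl)⟩
  | _, .pred q ts => ⟨[], .pred q fun i => (ts i).rename Sum.inl⟩
  | _, .not φ =>
      let p := prenex φ
      ⟨p.pre.map (!·), .not p.mat⟩
  | _, .and φ ψ =>
      let p := prenex φ
      let r := prenex ψ
      ⟨p.pre ++ r.pre, .and p.mat (r.mat.rename (Sum.map id (· + p.pre.length)))⟩
  | _, .ex φ =>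
      let p := prenex φ
      ⟨true :: p.pre,
        p.mat.rename fun v =>
          match v with
          | Sum.inl (some x) => Sum.inl x
          | Sum.inl none => Sum.inr 0
          | Sum.inr j => Sum.inr (j + 1)⟩

/-! ### The path-quantifier-eliminated acceptance formula `Θ̂(α)` -/

namespace FOAA

variable {Sig X D : Type} (A : FOAA Sig X D)

/-- One stage of the construction of `Θ̂ₙ` : conjoin, for every atom `q⁽ʲ⁾(t̄)` occurring in
the matrix so far, the instance `q⁽ʲ⁾(t̄) → ψ⁽ʲ⁺¹⁾[t̄/ȳ]` of the corresponding transition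
rule for the letter `a`, prenexing the transition quantifiers of `ψ` on the fly. -/
def stepPF (j : ℕ) (a : Sig) (Θ : PF D (ℕ × A.Q) (fun p => A.ar p.2) (ℕ × X)) :
    PF D (ℕ × A.Q) (fun p => A.ar p.2) (ℕ × X) :=
  (Θ.mat.atoms.filter fun atm => atm.1.1 == j).foldl
    (fun acc atm =>
      let pψ := prenex (A.ruleF (j + 1) atm.1.2 a)
      let m' : QF D (ℕ × A.Q) (fun p => A.ar p.2) ((ℕ × X) ⊕ ℕ) :=
        pψ.mat.subst fun v =>
          match v with
          | Sum.inl (Sum.inl x) => Term.var (Sum.inl x)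
          | Sum.inl (Sum.inr i) => atm.2 i
          | Sum.inr jj => Term.var (Sum.inr (jj + acc.pre.length))
      ⟨acc.pre ++ pψ.pre, .and acc.mat (QF.imp (.pred atm.1 atm.2) m')⟩)
    Θ

/-- `Θ̂ₙ(αᵢ)` for a prefix length `i ≤ |α|`. -/
def thetaHatStage (α : List Sig) (i : ℕ) : PF D (ℕ × A.Q) (fun p => A.ar p.2) (ℕ × X) :=
  ((List.finRange α.length).take i).foldl
    (fun acc j => A.stepPF j.val (α.get j) acc)
    (prenex ((stampF 0 A.init).rename fun v : Empty => v.elim))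

/-- `Θ̂ₙ(αₙ)`. -/
def thetaHatN (α : List Sig) : PF D (ℕ × A.Q) (fun p => A.ar p.2) (ℕ × X) :=
  A.thetaHatStage α α.length

/-- `Θ̂(α)`, in prenex form : `Θ̂ₙ(αₙ)` conjoined with the instances
`q⁽ⁿ⁾(t̄) → ⊥` for the occurring atoms with `q ∈ Q∖F`. -/
def thetaHat [Nonempty D] (α : List Sig) : PF D (ℕ × A.Q) (fun p => A.ar p.2) (ℕ × X) :=
  let Θ := A.thetaHatN α
  ⟨Θ.pre,
    (Θ.mat.atoms.filter fun atm => atm.1.1 == α.length).foldl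
      (fun m atm =>
        if atm.1.2 ∈ A.F then m
        else .and m (QF.imp (.pred atm.1 atm.2)
          (.not (.eq (Term.const (Classical.arbitrary D)) (Term.const (Classical.arbitrary D))))))
      Θ.mat⟩

/-- The length of the quantifier prefix of `Θ̂ₙ(αᵢ)`. -/
def stagePreLen (α : List Sig) (i : ℕ) : ℕ := (A.thetaHatStage α i).pre.length

/-- `ξ` : the monotonic function mapping each transition quantifier of `Θ̂(α)` to the
minimal stage of the sequence `Θ̂ₙ(α₀), …, Θ̂ₙ(αₙ)` where it occurs. -/
def xi (α : List Sig) (j : ℕ) : ℕ := sInf {i : ℕ | j < A.stagePreLen α i}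

/-- `ξ⁻¹max(k)` : the maximal quantifier index mapped by `ξ` to the stage `k`. -/
def xiInvMax (α : List Sig) (k : ℕ) : ℕ :=
  sSup {j : ℕ | j < (A.thetaHatN α).pre.length ∧ A.xi α j = k}

end FOAA

/-! ### Generalized Lyndon interpolants -/

namespace FOAA

variable {Sig X D : Type} (A : FOAA Sig X D)

/-- A generalized Lyndon interpolant (GLI) for the input event sequence `α`;
the formulas `Is k` live over an ambient variable type `W` into which the time-stamped
input variables are embedded by `ρ`. -/
structure IsGLI [Nonempty D] (α : List Sig) {W : Type} (ρ : (ℕ × X) → W)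
    (Is : ℕ → Fml D (ℕ × A.Q) (fun p => A.ar p.2) W) : Prop where
  neg_free : ∀ k ≤ α.length, (Is k).predsPol false = ∅
  init_entail : ∀ (I : Interp D (ℕ × A.Q) (fun p => A.ar p.2)) (ν : W → D),
    (((stampF 0 A.init).rename (fun v : Empty => v.elim) : Fml D (ℕ × A.Q) _ W)).Sat I ν →
    (Is 0).Sat I ν
  step_entail : ∀ (k : Fin α.length) (I : Interp D (ℕ × A.Q) (fun p => A.ar p.2)) (ν : W → D),
    (Is k.val).Sat I ν → ((A.stepFml k.val (α.get k)).rename ρ).Sat I ν →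
    (Is (k.val + 1)).Sat I ν
  final_unsat : ¬ ∃ (I : Interp D (ℕ × A.Q) (fun p => A.ar p.2)) (ν : W → D),
    (Is α.length).Sat I ν ∧ ((A.finalFml α.length).rename ρ).Sat I ν

/-! ### Unfoldings -/

/-- `⋀_{q ∈ Q∖F} ∀ȳ. q(ȳ) → ⊥` over the plain (un-stamped) signature. -/
def finalConstraint [Nonempty D] : Fml D A.Q A.ar Empty :=
  Fml.conj <| A.QList.map fun q =>
    if q ∈ A.F then Fml.tt
    else Fml.allN (Fml.imp (.pred q fun i => .var (Sum.inr i)) Fml.ff)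

/-- An unfolding of `A` : a finite, prefix-closed and complete set `dom ⊆ Σ*` labeled with
positive sentences, compatible with the transition relation. -/
structure IsUnfolding [Nonempty D] (dom : Set (List Sig))
    (lab : List Sig → Fml D A.Q A.ar Empty) : Prop where
  finite : dom.Finite
  prefix_closed : ∀ α ∈ dom, ∀ β : List Sig, β <+: α → β ∈ dom
  complete : ∀ α ∈ dom, ∃ a : Sig, ((α ++ [a]) ∈ dom ↔ ∀ b : Sig, α ++ [b] ∈ dom)
  pos : ∀ α ∈ dom, (lab α).Positive
  init_lab : ∀ (I : Interp D A.Q A.ar) (ν : Empty → D), (lab []).Sat I ν ↔ A.init.Sat I ν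
  step : ∀ α ∈ dom, ∀ a : Sig, (α ++ [a]) ∈ dom →
    ∀ (I : Interp D (ℕ × A.Q) (fun p => A.ar p.2)) (ν : (ℕ × X) → D),
      (((stampF 0 (lab α)).rename (fun v : Empty => v.elim) :
          Fml D (ℕ × A.Q) _ (ℕ × X))).Sat I ν →
      (A.stepFml 0 a).Sat I ν →
      (((stampF 1 (lab (α ++ [a]))).rename (fun v : Empty => v.elim) :
          Fml D (ℕ × A.Q) _ (ℕ × X))).Sat I ν

/-- A safe unfolding. -/
def UnfSafe [Nonempty D] (dom : Set (List Sig))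
    (lab : List Sig → Fml D A.Q A.ar Empty) : Prop :=
  ∀ α ∈ dom, ¬ ∃ (I : Interp D A.Q A.ar) (ν : Empty → D),
    (lab α).Sat I ν ∧ (A.finalConstraint).Sat I ν

/-- `α` is covered by `β`. -/
def Covers (dom : Set (List Sig)) (lab : List Sig → Fml D A.Q A.ar Empty)
    (α β : List Sig) : Prop :=
  β ∈ dom ∧ ∃ α' : List Sig, α' <+: α ∧ α' ∈ dom ∧
    ∀ (I : Interp D A.Q A.ar) (ν : Empty → D), (lab α').Sat I ν → (lab β).Sat I ν

def CoveredNode (dom : Set (List Sig)) (lab : List Sig → Fml D A.Q A.ar Empty)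
    (α : List Sig) : Prop :=
  ∃ β, A.Covers dom lab α β

/-- A closed unfolding : every leaf is covered by an uncovered node. -/
def UnfClosed (dom : Set (List Sig)) (lab : List Sig → Fml D A.Q A.ar Empty) : Prop :=
  ∀ α ∈ dom, (∀ a : Sig, (α ++ [a]) ∉ dom) →
    ∃ β, A.Covers dom lab α β ∧ ¬ A.CoveredNode dom lab β

end FOAA

/-- Existentially quantify the (finitely many) variables listed in `L`, yielding a
sentence. -/
def exClose {D Q : Type} {ar : Q → ℕ} [Nonempty D] {V : Type} [DecidableEq V]
    (L : List V) (φ : Fml D Q ar V) : Fml D Q ar Empty :=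
  Fml.exN (k := L.length)
    (φ.substVar fun v =>
      if hv : v ∈ L then Term.var (Sum.inr ⟨L.idxOf v, List.idxOf_lt_length_iff.mpr hv⟩)
      else Term.const (Classical.arbitrary D))

/-! ### Timed automata -/

/-- Clock constraints over `k` clocks. -/
inductive CC (k : ℕ) : Type where
  | le : Fin k → ℚ → CC k
  | ge : Fin k → ℚ → CC k
  | not : CC k → CC k
  | and : CC k → CC k → CC k

namespace CC

def sat {k : ℕ} (γ : Fin k → ℝ) : CC k → Prop
  | .le i c => γ i ≤ (c : ℝ)
  | .ge i c => (c : ℝ) ≤ γ i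
  | .not δ => ¬ sat γ δ
  | .and δ₁ δ₂ => sat γ δ₁ ∧ sat γ δ₂

/-- Translate a clock constraint into a first-order formula over ℝ, applied to the given
argument terms (the order relations are expressed via interpreted functions and equality
atoms). -/
def toFml {k : ℕ} {Q : Type} {ar : Q → ℕ} {V : Type} :
    CC k → (Fin k → Term ℝ V) → Fml ℝ Q ar V
  | .le i c, args =>
      .eq (Term.app (n := 1) (fun v => if v 0 ≤ (c : ℝ) then 1 else 0) ![args i])
        (Term.const 1)
  | .ge i c, args =>
      .eq (Term.app (n := 1) (fun v => if (c : ℝ) ≤ v 0 then 1 else 0) ![args i])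
        (Term.const 1)
  | .not δ, args => .not (δ.toFml args)
  | .and δ₁ δ₂, args => .and (δ₁.toFml args) (δ₂.toFml args)

/-- `CC.toFml` contains no predicate symbols, hence has any polarity. -/
theorem polarity_toFml {k : ℕ} {Q : Type} {ar : Q → ℕ} {V : Type} :
    ∀ (δ : CC k) (args : Fin k → Term ℝ V) (b : Bool),
      (δ.toFml (Q := Q) (ar := ar) args).Polarity b
  | .le _ _, _, _ => trivial
  | .ge _ _, _, _ => trivial
  | .not δ, args, b => polarity_toFml δ args (!b)
  | .and δ₁ δ₂, args, b => ⟨polarity_toFml δ₁ args b, polarity_toFml δ₂ args b⟩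

end CC

/-- A timed automaton with `k` clocks. -/
structure TimedAuto (Sig : Type) (k : ℕ) : Type 1 where
  S : Type
  SList : List S
  SList_mem : ∀ s : S, s ∈ SList
  S0 : Set S
  F : Set S
  E : List (S × Sig × S × Set (Fin k) × CC k)

/-- `τᵢ` : the time stamp before the `i`-th step (`τ₀ = 0`). -/
def timeAt {Sig : Type} (w : List (Sig × ℝ)) : ℕ → ℝ
  | 0 => 0
  | i + 1 => (w.map Prod.snd).getD i 0

/-- `0 ≤ τ₁ < τ₂ < …`. -/
def IsTimedWord {Sig : Type} (w : List (Sig × ℝ)) : Prop :=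
  (∀ h : 0 < w.length, 0 ≤ (w.get ⟨0, h⟩).2) ∧
    List.Chain' (· < ·) (w.map Prod.snd)

namespace TimedAuto

variable {Sig : Type} {k : ℕ} (T : TimedAuto Sig k)

/-- `T` has an accepting run over the timed word `w`. -/
def Accepts (w : List (Sig × ℝ)) : Prop :=
  ∃ r : ℕ → T.S × (Fin k → ℝ),
    (r 0).1 ∈ T.S0 ∧ ((r 0).2 = fun _ => 0) ∧
    (∀ i : Fin w.length,
      ∃ e ∈ T.E,
        e.1 = (r i.val).1 ∧ e.2.1 = (w.get i).1 ∧ e.2.2.1 = (r (i.val + 1)).1 ∧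
        CC.sat (fun c => (r i.val).2 c + (timeAt w (i.val + 1) - timeAt w i.val))
          e.2.2.2.2 ∧
        ∀ c : Fin k, (r (i.val + 1)).2 c =
          if c ∈ e.2.2.2.1 then 0
          else (r i.val).2 c + (timeAt w (i.val + 1) - timeAt w i.val)) ∧
    (r w.length).1 ∈ T.F

def Lang : Set (List (Sig × ℝ)) := {w | IsTimedWord w ∧ T.Accepts w}

/-- The first-order alternating automaton `A_T` associated with a timed automaton `T` :
predicates of arity `k+1` (the `k` values `yᵢ` tracking `t − xᵢ` plus the time stamp `z`
of the previous event), one input variable `t`. -/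
def toFOAA : FOAA Sig Unit ℝ where
  Q := T.S
  QList := T.SList
  QList_mem := T.SList_mem
  ar := fun _ => k + 1
  init := Fml.disj <|
    (T.SList.filter fun s => decide (s ∈ T.S0)).map fun s =>
      .pred s fun _ => Term.const 0
  init_pos := by
    apply Fml.polarity_disj
    intro φ hφ
    simp only [List.mem_map] at hφ
    obtain ⟨s, -, rfl⟩ := hφ
    exact rfl
  F := T.F
  delta := fun s a =>
    Fml.disj <|
      (T.E.filter fun e => decide (e.1 = s ∧ e.2.1 = a)).map fun e =>
        .and
          (.eq (Term.app (n := 2) (fun v => if v 0 < v 1 then 1 else 0)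
              ![Term.var (Sum.inr (Fin.last k)), Term.var (Sum.inl ())])
            (Term.const 1))
          (.and
            (e.2.2.2.2.toFml fun i =>
              Term.app (n := 2) (fun v => v 0 - v 1)
                ![Term.var (Sum.inr (Fin.last k)), Term.var (Sum.inr i.castSucc)])
            (.pred e.2.2.1 fun i =>
              Fin.lastCases (Term.var (Sum.inl ()))
                (fun c =>
                  if c ∈ e.2.2.2.1 then Term.var (Sum.inr (Fin.last k))
                  else Term.var (Sum.inr c.castSucc))
                i))
  delta_pos := by
    intro s a
    apply Fml.polarity_disj
    intro φ hφ
    simp only [List.mem_map] at hφ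
    obtain ⟨e, -, rfl⟩ := hφ
    exact ⟨trivial, CC.polarity_toFml _ _ true, rfl⟩

end TimedAuto

/-- The encoding `d(w)` of a timed word as a data word. -/
def encodeTimed {Sig : Type} (w : List (Sig × ℝ)) : DWord Sig Unit ℝ :=
  w.map fun p => (p.1, fun _ => p.2)

/-! ### Register automata -/

/-- A finite-memory (register) automaton with `r` registers over the infinite alphabet `A`;
`none` plays the role of the symbol `#`. -/
structure RegAuto (A : Type) (r : ℕ) : Type 1 where
  S : Type
  SList : List S
  SList_mem : ∀ s : S, s ∈ SList
  s0 : S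
  u0 : Fin r → Option A
  u0_distinct : ∀ i j : Fin r, i ≠ j → u0 i = u0 j → u0 i = none
  rho : S → Option (Fin r)
  mu : List (S × Fin r × S)
  F : Set S

namespace RegAuto

variable {A : Type} {r : ℕ} (R : RegAuto A r)

def Accepts (word : List A) : Prop :=
  ∃ v : ℕ → R.S × (Fin r → Option A),
    v 0 = (R.s0, R.u0) ∧
    (∀ i : Fin word.length,
      ((∃ kk : Fin r, (v i.val).2 kk = some (word.get i) ∧
          (v (i.val + 1)).2 = (v i.val).2 ∧
          ((v i.val).1, kk, (v (i.val + 1)).1) ∈ R.mu) ∨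
        ((∀ kk : Fin r, (v i.val).2 kk ≠ some (word.get i)) ∧
          ∃ kk : Fin r, R.rho (v i.val).1 = some kk ∧
            (v (i.val + 1)).2 kk = some (word.get i) ∧
            (∀ kk' : Fin r, kk' ≠ kk → (v (i.val + 1)).2 kk' = (v i.val).2 kk') ∧
            ((v i.val).1, kk, (v (i.val + 1)).1) ∈ R.mu))) ∧
    (v word.length).1 ∈ R.F

def Lang : Set (List A) := {u | R.Accepts u}

/-- The first-order alternating automaton `A_R` associated with a register automaton `R` :
a single input event, one input variable `x`, predicates of arity `r`, over the data
domain `Option A` (where `none` encodes `#`). -/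
def toFOAA : FOAA Unit Unit (Option A) where
  Q := R.S
  QList := R.SList
  QList_mem := R.SList_mem
  ar := fun _ => r
  init := .pred R.s0 fun i => Term.const (R.u0 i)
  init_pos := rfl
  F := R.F
  delta := fun s _ =>
    Fml.disj <|
      (R.mu.filter fun m => decide (m.1 = s)).map fun m =>
        Fml.or
          (.and (.eq (Term.var (Sum.inr m.2.1)) (Term.var (Sum.inl ())))
            (.pred m.2.2 fun i => Term.var (Sum.inr i)))
          (.and
            (Fml.conj <| (List.finRange r).map fun i =>
              .not (.eq (Term.var (Sum.inl ())) (Term.var (Sum.inr i))))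
            (.pred m.2.2 fun i =>
              if i = m.2.1 then Term.var (Sum.inl ()) else Term.var (Sum.inr i)))
  delta_pos := by
    intro s a
    apply Fml.polarity_disj
    intro φ hφ
    simp only [List.mem_map] at hφ
    obtain ⟨m, -, rfl⟩ := hφ
    refine Fml.polarity_or ⟨trivial, rfl⟩ ⟨?_, rfl⟩
    apply Fml.polarity_conj
    intro ψ hψ
    simp only [List.mem_map] at hψ
    obtain ⟨i, -, rfl⟩ := hψ
    exact trivial

end RegAuto

/-- The encoding of a word over the alphabet `A` as a data word. -/
def encodeReg {A : Type} (u : List A) : DWord Unit Unit (Option A) :=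
  u.map fun a => ((), fun _ => some a)

end FOADA

namespace FOADA

section AuxLemmas

variable {D Q : Type} {ar : Q → ℕ}

theorem Term.eval_rename {V W : Type} (f : V → W) (ν : W → D) :
    ∀ t : Term D V, (t.rename f).eval ν = t.eval (ν ∘ f)
  | .var v => rfl
  | .app g ts => congrArg g (funext fun i => Term.eval_rename f ν (ts i))

theorem Term.vars_rename {V W : Type} (f : V → W) :
    ∀ t : Term D V, (t.rename f).vars ⊆ f '' t.vars
  | .var v => by simp [Term.rename, Term.vars]
  | .app g ts => by
      intro w hw
      simp only [Term.rename, Term.vars, Set.mem_iUnion] at hw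
      obtain ⟨i, hi⟩ := hw
      obtain ⟨v, hv, rfl⟩ := Term.vars_rename f (ts i) hi
      exact ⟨v, by simp [Term.vars, Set.mem_iUnion]; exact ⟨i, hv⟩, rfl⟩

namespace Fml

theorem sat_and {V : Type} (I : Interp D Q ar) (φ ψ : Fml D Q ar V) (ν : V → D) :
    (Fml.and φ ψ).Sat I ν ↔ φ.Sat I ν ∧ ψ.Sat I ν := Iff.rfl

theorem sat_rename (I : Interp D Q ar) :
    ∀ {V W : Type} (f : V → W) (φ : Fml D Q ar V) (ν : W → D),
      (φ.rename f).Sat I ν ↔ φ.Sat I (ν ∘ f)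
  | _, _, f, .eq t s, ν => by
      simp [Fml.rename, Fml.Sat, Term.eval_rename]
  | _, _, f, .pred q ts, ν => by
      simp [Fml.rename, Fml.Sat, Term.eval_rename]
  | _, _, f, .not φ, ν => by
      simp [Fml.rename, Fml.Sat, sat_rename I f φ ν]
  | _, _, f, .and φ ψ, ν => by
      simp [Fml.rename, Fml.Sat, sat_rename I f φ ν, sat_rename I f ψ ν]
  | _, _, f, .ex φ, ν => by
      simp only [Fml.rename, Fml.Sat]
      refine exists_congr fun d => ?_
      rw [sat_rename I (Option.map f) φ]
      have h : ((fun o => Option.elim o d ν) ∘ Option.map f)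
          = fun o => Option.elim o d (ν ∘ f) := by
        funext o; cases o <;> rfl
      rw [h]

theorem preds_rename :
    ∀ {V W : Type} (f : V → W) (φ : Fml D Q ar V), (φ.rename f).preds = φ.preds
  | _, _, _, .eq _ _ => rfl
  | _, _, _, .pred _ _ => rfl
  | _, _, f, .not φ => by simp [Fml.rename, Fml.preds, preds_rename f φ]
  | _, _, f, .and φ ψ => by
      simp [Fml.rename, Fml.preds, preds_rename f φ, preds_rename f ψ]
  | _, _, f, .ex φ => by simp [Fml.rename, Fml.preds, preds_rename (Option.map f) φ]

theorem predsPol_rename :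
    ∀ (b : Bool) {V W : Type} (f : V → W) (φ : Fml D Q ar V),
      (φ.rename f).predsPol b = φ.predsPol b
  | _, _, _, _, .eq _ _ => rfl
  | _, _, _, _, .pred _ _ => rfl
  | b, _, _, f, .not φ => by simp [Fml.rename, Fml.predsPol, predsPol_rename (!b) f φ]
  | b, _, _, f, .and φ ψ => by
      simp [Fml.rename, Fml.predsPol, predsPol_rename b f φ, predsPol_rename b f ψ]
  | b, _, _, f, .ex φ => by
      simp [Fml.rename, Fml.predsPol, predsPol_rename b (Option.map f) φ]

theorem fv_rename :
    ∀ {V W : Type} (f : V → W) (φ : Fml D Q ar V), (φ.rename f).fv ⊆ f '' φ.fv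
  | _, _, f, .eq t s => by
      intro w hw
      rcases hw with hw | hw
      · obtain ⟨v, hv, rfl⟩ := Term.vars_rename f t hw
        exact ⟨v, Or.inl hv, rfl⟩
      · obtain ⟨v, hv, rfl⟩ := Term.vars_rename f s hw
        exact ⟨v, Or.inr hv, rfl⟩
  | _, _, f, .pred q ts => by
      intro w hw
      simp only [Fml.rename, Fml.fv, Set.mem_iUnion] at hw
      obtain ⟨i, hi⟩ := hw
      obtain ⟨v, hv, rfl⟩ := Term.vars_rename f (ts i) hi
      exact ⟨v, by simp [Fml.fv, Set.mem_iUnion]; exact ⟨i, hv⟩, rfl⟩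
  | _, _, f, .not φ => fv_rename f φ
  | _, _, f, .and φ ψ => by
      intro w hw
      rcases hw with hw | hw
      · obtain ⟨v, hv, rfl⟩ := fv_rename f φ hw
        exact ⟨v, Or.inl hv, rfl⟩
      · obtain ⟨v, hv, rfl⟩ := fv_rename f ψ hw
        exact ⟨v, Or.inr hv, rfl⟩
  | _, _, f, .ex φ => by
      intro w hw
      have hw' : some w ∈ (φ.rename (Option.map f)).fv := hw
      obtain ⟨v, hv, hvw⟩ := fv_rename (Option.map f) φ hw'
      cases v with
      | none => simp [Option.map] at hvw
      | some v =>
          simp only [Option.map_some] at hvw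
          injection hvw with hvw
          exact ⟨v, hv, hvw⟩

theorem predsPol_empty_of_polarity :
    ∀ {V : Type} (φ : Fml D Q ar V) (b : Bool), φ.Polarity b → φ.predsPol (!b) = ∅
  | _, .eq _ _, _, _ => rfl
  | _, .pred q _, b, hb => by subst hb; rfl
  | _, .not φ, b, hb => by
      have := predsPol_empty_of_polarity φ (!b) hb
      simpa [Fml.predsPol] using this
  | _, .and φ ψ, b, hb => by
      simp [Fml.predsPol, predsPol_empty_of_polarity φ b hb.1,
        predsPol_empty_of_polarity ψ b hb.2]
  | _, .ex φ, b, hb => predsPol_empty_of_polarity φ b hb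

theorem preds_exN :
    ∀ {V : Type} {k : ℕ} (φ : Fml D Q ar (V ⊕ Fin k)), (Fml.exN φ).preds = φ.preds
  | _, 0, φ => preds_rename _ φ
  | _, k + 1, φ => by
      show (Fml.exN (k := k) _).preds = _
      rw [preds_exN]
      simp [Fml.preds, preds_rename]

theorem predsPol_exN :
    ∀ (b : Bool) {V : Type} {k : ℕ} (φ : Fml D Q ar (V ⊕ Fin k)),
      (Fml.exN φ).predsPol b = φ.predsPol b
  | b, _, 0, φ => predsPol_rename b _ φ
  | b, _, k + 1, φ => by
      show (Fml.exN (k := k) _).predsPol b = _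
      rw [predsPol_exN]
      simp [Fml.predsPol, predsPol_rename]

theorem fv_exN :
    ∀ {V : Type} {k : ℕ} (φ : Fml D Q ar (V ⊕ Fin k)),
      (Fml.exN φ).fv ⊆ {v | Sum.inl v ∈ φ.fv}
  | _, 0, φ => by
      intro v hv
      obtain ⟨u, hu, huv⟩ := fv_rename _ φ hv
      cases u with
      | inl u => simpa [← huv] using hu
      | inr j => exact j.elim0
  | _, k + 1, φ => by
      intro v hv
      have hv' : v ∈ (Fml.exN (k := k) (.ex (φ.rename fun w =>
          match w with
          | Sum.inl w => some (Sum.inl w)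
          | Sum.inr j => Fin.lastCases none (fun i => some (Sum.inr i)) j))).fv := hv
      have h1 := fv_exN _ hv'
      have h2 : some (Sum.inl v) ∈ (φ.rename fun w =>
          match w with
          | Sum.inl w => some (Sum.inl w)
          | Sum.inr j => Fin.lastCases none (fun i => some (Sum.inr i)) j).fv := h1
      obtain ⟨u, hu, huv⟩ := fv_rename _ φ h2
      cases u with
      | inl u =>
          simp only at huv
          injection huv with huv
          injection huv with huv
          exact huv ▸ hu
      | inr j =>
          exfalso
          revert huv
          refine Fin.lastCases ?_ (fun i => ?_) j <;> simp

theorem preds_allN {V : Type} {k : ℕ} (φ : Fml D Q ar (V ⊕ Fin k)) :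
    (Fml.allN φ).preds = φ.preds := by
  simp [Fml.allN, Fml.preds, preds_exN]

theorem predsPol_allN (b : Bool) {V : Type} {k : ℕ} (φ : Fml D Q ar (V ⊕ Fin k)) :
    (Fml.allN φ).predsPol b = φ.predsPol b := by
  simp [Fml.allN, Fml.predsPol, predsPol_exN, Bool.not_not]

theorem fv_allN {V : Type} {k : ℕ} (φ : Fml D Q ar (V ⊕ Fin k)) :
    (Fml.allN φ).fv ⊆ {v | Sum.inl v ∈ φ.fv} := by
  simpa [Fml.allN, Fml.fv] using fv_exN (.not φ)

theorem preds_imp {V : Type} (φ ψ : Fml D Q ar V) :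
    (Fml.imp φ ψ).preds = φ.preds ∪ ψ.preds := by
  simp [Fml.imp, Fml.preds]

theorem predsPol_imp (b : Bool) {V : Type} (φ ψ : Fml D Q ar V) :
    (Fml.imp φ ψ).predsPol b = φ.predsPol (!b) ∪ ψ.predsPol b := by
  simp [Fml.imp, Fml.predsPol, Bool.not_not]

theorem fv_imp {V : Type} (φ ψ : Fml D Q ar V) :
    (Fml.imp φ ψ).fv = φ.fv ∪ ψ.fv := by
  simp [Fml.imp, Fml.fv]

theorem vars_const {V : Type} (d : D) : (Term.const d : Term D V).vars = ∅ := by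
  simp [Term.const, Term.vars]

theorem preds_tt [Nonempty D] {V : Type} : (Fml.tt : Fml D Q ar V).preds = ∅ := rfl

theorem fv_tt [Nonempty D] {V : Type} : (Fml.tt : Fml D Q ar V).fv = ∅ := by
  simp [Fml.tt, Fml.fv, vars_const]

theorem sat_tt [Nonempty D] {V : Type} (I : Interp D Q ar) (ν : V → D) :
    (Fml.tt : Fml D Q ar V).Sat I ν := rfl

theorem sat_conj [Nonempty D] {V : Type} (I : Interp D Q ar) (ν : V → D) :
    ∀ l : List (Fml D Q ar V), (Fml.conj l).Sat I ν ↔ ∀ φ ∈ l, φ.Sat I ν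
  | [] => by
      simp only [List.not_mem_nil, false_implies, implies_true, iff_true]
      exact sat_tt I ν
  | φ :: l => by
      simp [Fml.conj, sat_and, sat_conj I ν l]

theorem preds_conj [Nonempty D] {V : Type} (S : Set Q) :
    ∀ l : List (Fml D Q ar V), (∀ φ ∈ l, φ.preds ⊆ S) → (Fml.conj l).preds ⊆ S
  | [], _ => by simp [Fml.conj, preds_tt]
  | φ :: l, h => by
      simp only [Fml.conj, Fml.preds]
      exact Set.union_subset (h φ (by simp))
        (preds_conj S l fun ψ hψ => h ψ (by simp [hψ]))

theorem predsPol_conj [Nonempty D] (b : Bool) {V : Type} (S : Set Q) :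
    ∀ l : List (Fml D Q ar V), (∀ φ ∈ l, φ.predsPol b ⊆ S) → (Fml.conj l).predsPol b ⊆ S
  | [], _ => by simp [Fml.conj, Fml.tt, Fml.predsPol]
  | φ :: l, h => by
      simp only [Fml.conj, Fml.predsPol]
      exact Set.union_subset (h φ (by simp))
        (predsPol_conj b S l fun ψ hψ => h ψ (by simp [hψ]))

theorem fv_conj [Nonempty D] {V : Type} (S : Set V) :
    ∀ l : List (Fml D Q ar V), (∀ φ ∈ l, φ.fv ⊆ S) → (Fml.conj l).fv ⊆ S
  | [], _ => by simp [Fml.conj, fv_tt]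
  | φ :: l, h => by
      simp only [Fml.conj, Fml.fv]
      exact Set.union_subset (h φ (by simp))
        (fv_conj S l fun ψ hψ => h ψ (by simp [hψ]))

end Fml

theorem preds_stampF (i : ℕ) :
    ∀ {V : Type} (φ : Fml D Q ar V), (stampF i φ).preds ⊆ {p : ℕ × Q | p.1 = i}
  | _, .eq _ _ => by simp [stampF, Fml.preds]
  | _, .pred q ts => by simp [stampF, Fml.preds]
  | _, .not φ => preds_stampF i φ
  | _, .and φ ψ => by
      simp only [stampF, Fml.preds]
      exact Set.union_subset (preds_stampF i φ) (preds_stampF i ψ)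
  | _, .ex φ => preds_stampF i φ

theorem predsPol_stampF (i : ℕ) :
    ∀ (b : Bool) {V : Type} (φ : Fml D Q ar V),
      (stampF i φ).predsPol b ⊆ {p : ℕ × Q | p.1 = i}
  | _, _, .eq _ _ => by simp [stampF, Fml.predsPol]
  | b, _, .pred q ts => by
      cases b <;> simp [stampF, Fml.predsPol]
  | b, _, .not φ => predsPol_stampF i (!b) φ
  | b, _, .and φ ψ => by
      simp only [stampF, Fml.predsPol]
      exact Set.union_subset (predsPol_stampF i b φ) (predsPol_stampF i b ψ)
  | b, _, .ex φ => predsPol_stampF i b φ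

theorem polarity_stampF (i : ℕ) :
    ∀ {V : Type} (φ : Fml D Q ar V) (b : Bool), φ.Polarity b → (stampF i φ).Polarity b
  | _, .eq _ _, _, _ => trivial
  | _, .pred _ _, _, hb => hb
  | _, .not φ, b, hb => polarity_stampF i φ (!b) hb
  | _, .and φ ψ, b, hb => ⟨polarity_stampF i φ b hb.1, polarity_stampF i ψ b hb.2⟩
  | _, .ex φ, b, hb => polarity_stampF i φ b hb

theorem fv_stampF (i : ℕ) :
    ∀ {V : Type} (φ : Fml D Q ar V), (stampF i φ).fv = φ.fv
  | _, .eq _ _ => rfl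
  | _, .pred q ts => rfl
  | _, .not φ => fv_stampF i φ
  | _, .and φ ψ => by simp [stampF, Fml.fv, fv_stampF i φ, fv_stampF i ψ]
  | _, .ex φ => by
      show {v | some v ∈ (stampF i φ).fv} = _
      rw [fv_stampF i φ]
      rfl

end AuxLemmas

section AutLemmas

variable {Sig X D : Type} (A : FOAA Sig X D)

theorem preds_ruleF (i : ℕ) (q : A.Q) (a : Sig) :
    (A.ruleF i q a).preds ⊆ {p : ℕ × A.Q | p.1 = i} := by
  rw [FOAA.ruleF, Fml.preds_rename]
  exact preds_stampF i _

theorem predsPolF_ruleF (i : ℕ) (q : A.Q) (a : Sig) :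
    (A.ruleF i q a).predsPol false = ∅ := by
  have h : (A.ruleF i q a).Polarity true :=
    Fml.polarity_rename _ _ true (polarity_stampF i _ true (A.delta_pos q a))
  simpa using Fml.predsPol_empty_of_polarity _ true h

theorem fv_ruleF (i : ℕ) (q : A.Q) (a : Sig) (p : ℕ × X)
    (hv : Sum.inl p ∈ (A.ruleF i q a).fv) : p.1 = i := by
  obtain ⟨u, _, huv⟩ := Fml.fv_rename _ _ hv
  cases u with
  | inl u =>
      simp only [Sum.map, Function.comp] at huv
      injection huv with huv
      simp [← huv]
  | inr j => simp [Sum.map] at huv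

theorem preds_stepFml [Nonempty D] (k : ℕ) (a : Sig) :
    (A.stepFml k a).preds ⊆ {p : ℕ × A.Q | p.1 = k ∨ p.1 = k + 1} := by
  apply Fml.preds_conj
  intro φ hφ
  simp only [List.mem_map] at hφ
  obtain ⟨q, -, rfl⟩ := hφ
  rw [Fml.preds_allN, Fml.preds_imp]
  apply Set.union_subset
  · intro p hp
    simp only [Fml.preds, Set.mem_singleton_iff] at hp
    subst hp
    exact Or.inl rfl
  · exact (preds_ruleF A (k + 1) q a).trans fun p hp => Or.inr hp

theorem predsPolF_stepFml [Nonempty D] (k : ℕ) (a : Sig) :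
    (A.stepFml k a).predsPol false ⊆ {p : ℕ × A.Q | p.1 = k} := by
  apply Fml.predsPol_conj
  intro φ hφ
  simp only [List.mem_map] at hφ
  obtain ⟨q, -, rfl⟩ := hφ
  rw [Fml.predsPol_allN, Fml.predsPol_imp, predsPolF_ruleF A (k + 1) q a]
  intro p hp
  simp only [Set.union_empty, Bool.not_false, Fml.predsPol, if_true,
    Set.mem_singleton_iff] at hp
  subst hp
  rfl

theorem fv_stepFml [Nonempty D] (k : ℕ) (a : Sig) :
    (A.stepFml k a).fv ⊆ {p : ℕ × X | p.1 = k + 1} := by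
  apply Fml.fv_conj
  intro φ hφ
  simp only [List.mem_map] at hφ
  obtain ⟨q, -, rfl⟩ := hφ
  refine (Fml.fv_allN _).trans ?_
  intro v hv
  rw [Fml.fv_imp] at hv
  rcases hv with hv | hv
  · exfalso
    simp only [Fml.fv, Set.mem_iUnion, Term.vars, Set.mem_singleton_iff] at hv
    obtain ⟨i, hi⟩ := hv
    exact Sum.inl_ne_inr hi
  · exact fv_ruleF A (k + 1) q a v hv

theorem preds_finalFml [Nonempty D] (n : ℕ) :
    (A.finalFml n).preds ⊆ {p : ℕ × A.Q | p.1 = n} := by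
  apply Fml.preds_conj
  intro φ hφ
  simp only [List.mem_map] at hφ
  obtain ⟨q, -, rfl⟩ := hφ
  by_cases hq : q ∈ A.F
  · simp [hq, Fml.preds_tt]
  · simp only [hq, if_false]
    rw [Fml.preds_allN, Fml.preds_imp]
    apply Set.union_subset
    · intro p hp
      simp only [Fml.preds, Set.mem_singleton_iff] at hp
      subst hp
      rfl
    · simp [Fml.ff, Fml.tt, Fml.preds]

theorem predsPolF_finalFml [Nonempty D] (n : ℕ) :
    (A.finalFml n).predsPol false ⊆ {p : ℕ × A.Q | p.1 = n} := by
  apply Fml.predsPol_conj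
  intro φ hφ
  simp only [List.mem_map] at hφ
  obtain ⟨q, -, rfl⟩ := hφ
  by_cases hq : q ∈ A.F
  · simp [hq, Fml.tt, Fml.predsPol]
  · simp only [hq, if_false]
    rw [Fml.predsPol_allN, Fml.predsPol_imp]
    apply Set.union_subset
    · intro p hp
      simp only [Bool.not_false, Fml.predsPol, if_true, Set.mem_singleton_iff] at hp
      subst hp
      rfl
    · simp [Fml.ff, Fml.tt, Fml.predsPol]

theorem fv_finalFml [Nonempty D] (n : ℕ) (S : Set (ℕ × X)) :
    (A.finalFml n).fv ⊆ S := by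
  apply Fml.fv_conj
  intro φ hφ
  simp only [List.mem_map] at hφ
  obtain ⟨q, -, rfl⟩ := hφ
  by_cases hq : q ∈ A.F
  · simp [hq, Fml.fv_tt]
  · simp only [hq, if_false]
    refine (Fml.fv_allN _).trans ?_
    intro v hv
    exfalso
    rw [Fml.fv_imp] at hv
    rcases hv with hv | hv
    · simp only [Fml.fv, Set.mem_iUnion, Term.vars, Set.mem_singleton_iff] at hv
      obtain ⟨i, hi⟩ := hv
      exact Sum.inl_ne_inr hi
    · simp only [Fml.ff, Fml.fv, Fml.fv_tt] at hv
      exact absurd hv (by simp [Fml.tt, Fml.fv, Fml.vars_const])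

end AutLemmas

/-- Proposition 1, existence of local GLIs. -/
theorem statement_12 {Sig X D : Type} [Finite Sig] [Finite X] [Infinite D] [Nonempty D]
    (A : FOAA Sig X D)
    (lyndon : ∀ φ ψ : Fml D (ℕ × A.Q) (fun p => A.ar p.2) (ℕ × X),
      (¬ ∃ (I : Interp D (ℕ × A.Q) (fun p => A.ar p.2)) (ν : (ℕ × X) → D),
          φ.Sat I ν ∧ ψ.Sat I ν) →
      ∃ ι : Fml D (ℕ × A.Q) (fun p => A.ar p.2) (ℕ × X),
        (∀ I ν, φ.Sat I ν → ι.Sat I ν) ∧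
        (¬ ∃ I ν, ι.Sat I ν ∧ ψ.Sat I ν) ∧
        ι.preds ⊆ φ.preds ∩ ψ.preds ∧ ι.fv ⊆ φ.fv ∩ ψ.fv ∧
        ι.predsPol true ⊆ φ.predsPol true ∩ ψ.predsPol true ∧
        ι.predsPol false ⊆ φ.predsPol false ∩ ψ.predsPol false)
    (α : List Sig) (hα : α ≠ [])
    (hunsat : ¬ ∃ (I : Interp D (ℕ × A.Q) (fun p => A.ar p.2)) (ν : (ℕ × X) → D),
        (A.upsilon α).Sat I ν) :
    ∃ Is : ℕ → Fml D (ℕ × A.Q) (fun p => A.ar p.2) (ℕ × X),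
      A.IsGLI α id Is ∧
      ∀ k ≤ α.length, (Is k).preds ⊆ {p : ℕ × A.Q | p.1 = k} ∧ (Is k).fv = ∅ := by
  classical
  set n := α.length with hn
  let ι0 : Fml D (ℕ × A.Q) (fun p => A.ar p.2) (ℕ × X) :=
    (stampF 0 A.init).rename (fun v : Empty => v.elim)
  let L : List (Fml D (ℕ × A.Q) (fun p => A.ar p.2) (ℕ × X)) :=
    (List.finRange n).map fun j => A.stepFml j.val (α.get j)
  let Psi : ℕ → Fml D (ℕ × A.Q) (fun p => A.ar p.2) (ℕ × X) := fun k =>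
    Fml.and (Fml.conj (List.drop k L)) (A.finalFml n)
  have hLlen : L.length = n := by simp [L]
  have hdrop : ∀ (k) (hk : k < n), List.drop k L
      = A.stepFml k (α.get ⟨k, hk⟩) :: List.drop (k + 1) L := by
    intro k hk
    have hk' : k < L.length := by rw [hLlen]; exact hk
    rw [List.drop_eq_getElem_cons hk']
    congr 1
    simp only [L, List.getElem_map, List.getElem_finRange]
    rfl
  have hPsiStep : ∀ (k) (hk : k < n) (I : Interp D (ℕ × A.Q) (fun p => A.ar p.2))
      (ν : (ℕ × X) → D),
      (Psi k).Sat I ν ↔ (A.stepFml k (α.get ⟨k, hk⟩)).Sat I ν ∧ (Psi (k + 1)).Sat I ν := by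
    intro k hk I ν
    show (Fml.and (Fml.conj (List.drop k L)) (A.finalFml n)).Sat I ν ↔
      _ ∧ (Fml.and (Fml.conj (List.drop (k + 1) L)) (A.finalFml n)).Sat I ν
    rw [hdrop k hk]
    simp only [Fml.conj, Fml.sat_and]
    tauto
  have hmono : ∀ m : ℕ, {p : ℕ × A.Q | m + 1 ≤ p.1} ⊆ {p : ℕ × A.Q | m ≤ p.1} := by
    intro m p hp
    have : m + 1 ≤ p.1 := hp
    show m ≤ p.1
    omega
  have hPsiBound : ∀ d k, k + d = n →
      (Psi k).preds ⊆ {p : ℕ × A.Q | k ≤ p.1} ∧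
      (Psi k).predsPol false ⊆ {p : ℕ × A.Q | k ≤ p.1} ∧
      (Psi k).fv ⊆ {p : ℕ × X | k + 1 ≤ p.1} := by
    intro d
    induction d with
    | zero =>
        intro k hk
        have hk' : k = n := by omega
        have hLd : List.drop k L = [] := by rw [hk', ← hLlen]; exact List.drop_length
        have hfin1 : (A.finalFml n).preds ⊆ {p : ℕ × A.Q | k ≤ p.1} :=
          (preds_finalFml A n).trans (by intro p hp; have : p.1 = n := hp; show k ≤ p.1; omega)
        have hfin2 : (A.finalFml n).predsPol false ⊆ {p : ℕ × A.Q | k ≤ p.1} :=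
          (predsPolF_finalFml A n).trans
            (by intro p hp; have : p.1 = n := hp; show k ≤ p.1; omega)
        refine ⟨?_, ?_, ?_⟩
        · show (Fml.and (Fml.conj (List.drop k L)) (A.finalFml n)).preds ⊆ _
          rw [hLd]
          simp only [Fml.conj, Fml.preds]
          exact Set.union_subset (Set.empty_subset _) hfin1
        · show (Fml.and (Fml.conj (List.drop k L)) (A.finalFml n)).predsPol false ⊆ _
          rw [hLd]
          simp only [Fml.conj, Fml.predsPol]
          refine Set.union_subset ?_ hfin2
          simp [Fml.tt, Fml.predsPol]
        · show (Fml.and (Fml.conj (List.drop k L)) (A.finalFml n)).fv ⊆ _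
          rw [hLd]
          simp only [Fml.conj, Fml.fv]
          refine Set.union_subset ?_ (fv_finalFml A n _)
          simp [Fml.tt, Fml.fv, Fml.vars_const]
    | succ d ih =>
        intro k hk
        have hkn : k < n := by omega
        obtain ⟨ih1, ih2, ih3⟩ := ih (k + 1) (by omega)
        have ih1' : (Fml.and (Fml.conj (List.drop (k + 1) L)) (A.finalFml n)).preds
            ⊆ {p : ℕ × A.Q | k + 1 ≤ p.1} := ih1
        have ih2' : (Fml.and (Fml.conj (List.drop (k + 1) L)) (A.finalFml n)).predsPol false
            ⊆ {p : ℕ × A.Q | k + 1 ≤ p.1} := ih2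
        have ih3' : (Fml.and (Fml.conj (List.drop (k + 1) L)) (A.finalFml n)).fv
            ⊆ {p : ℕ × X | k + 2 ≤ p.1} := ih3
        simp only [Psi, Fml.preds, Fml.predsPol, Fml.fv] at ih1' ih2' ih3' ⊢
        rw [hdrop k hkn]
        simp only [Fml.conj, Fml.preds, Fml.predsPol, Fml.fv]
        refine ⟨?_, ?_, ?_⟩
        · refine Set.union_subset (Set.union_subset ?_ ?_) ?_
          · refine (preds_stepFml A k _).trans ?_
            intro p hp
            have : p.1 = k ∨ p.1 = k + 1 := hp
            show k ≤ p.1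
            omega
          · refine ((Set.subset_union_left).trans ih1').trans ?_
            intro p hp
            have : k + 1 ≤ p.1 := hp
            show k ≤ p.1
            omega
          · refine ((Set.subset_union_right).trans ih1').trans ?_
            intro p hp
            have : k + 1 ≤ p.1 := hp
            show k ≤ p.1
            omega
        · refine Set.union_subset (Set.union_subset ?_ ?_) ?_
          · refine (predsPolF_stepFml A k _).trans ?_
            intro p hp
            have : p.1 = k := hp
            show k ≤ p.1
            omega
          · refine ((Set.subset_union_left).trans ih2').trans ?_
            intro p hp
            have : k + 1 ≤ p.1 := hp
            show k ≤ p.1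
            omega
          · refine ((Set.subset_union_right).trans ih2').trans ?_
            intro p hp
            have : k + 1 ≤ p.1 := hp
            show k ≤ p.1
            omega
        · refine Set.union_subset (Set.union_subset ?_ ?_) ?_
          · refine (fv_stepFml A k _).trans ?_
            intro p hp
            have : p.1 = k + 1 := hp
            show k + 1 ≤ p.1
            omega
          · refine ((Set.subset_union_left).trans ih3').trans ?_
            intro p hp
            have : k + 2 ≤ p.1 := hp
            show k + 1 ≤ p.1
            omega
          · refine ((Set.subset_union_right).trans ih3').trans ?_
            intro p hp
            have : k + 2 ≤ p.1 := hp
            show k + 1 ≤ p.1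
            omega
  have h0 : ¬ ∃ (I : Interp D (ℕ × A.Q) (fun p => A.ar p.2)) (ν : (ℕ × X) → D),
      ι0.Sat I ν ∧ (Psi 0).Sat I ν := by
    rintro ⟨I, ν, h1, h2⟩
    have h2' : (Fml.and (Fml.conj (List.drop 0 L)) (A.finalFml n)).Sat I ν := h2
    rw [Fml.sat_and] at h2'
    refine hunsat ⟨I, ν, ?_⟩
    show (Fml.and (Fml.and ι0 (Fml.conj L)) (A.finalFml n)).Sat I ν
    rw [Fml.sat_and, Fml.sat_and]
    exact ⟨⟨h1, h2'.1⟩, h2'.2⟩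
  let stepL : ℕ → Fml D (ℕ × A.Q) (fun p => A.ar p.2) (ℕ × X) := fun k =>
    if hk : k < n then A.stepFml k (α.get ⟨k, hk⟩) else Fml.tt
  let Is : ℕ → Fml D (ℕ × A.Q) (fun p => A.ar p.2) (ℕ × X) := fun k =>
    Nat.rec (motive := fun _ => Fml D (ℕ × A.Q) (fun p => A.ar p.2) (ℕ × X))
      (Classical.choose (lyndon ι0 (Psi 0) h0))
      (fun k prev =>
        if h : ¬ ∃ (I : Interp D (ℕ × A.Q) (fun p => A.ar p.2)) (ν : (ℕ × X) → D),
            (Fml.and prev (stepL k)).Sat I ν ∧ (Psi (k + 1)).Sat I ν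
        then Classical.choose (lyndon (Fml.and prev (stepL k)) (Psi (k + 1)) h)
        else Fml.tt) k
  have key : ∀ k, k ≤ n →
      (Is k).preds ⊆ {p : ℕ × A.Q | p.1 = k} ∧
      (Is k).predsPol false = ∅ ∧
      (Is k).fv = ∅ ∧
      ¬ ∃ (I : Interp D (ℕ × A.Q) (fun p => A.ar p.2)) (ν : (ℕ × X) → D),
          (Is k).Sat I ν ∧ (Psi k).Sat I ν := by
    intro k
    induction k with
    | zero =>
        intro _
        obtain ⟨s1, s2, s3, s4, s5, s6⟩ := Classical.choose_spec (lyndon ι0 (Psi 0) h0)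
        have hIs0 : Is 0 = Classical.choose (lyndon ι0 (Psi 0) h0) := rfl
        rw [hIs0]
        have hι : ι0.preds ⊆ {p : ℕ × A.Q | p.1 = 0} := by
          show ((stampF 0 A.init).rename _).preds ⊆ _
          rw [Fml.preds_rename]
          exact preds_stampF 0 _
        have hιneg : ι0.predsPol false = ∅ := by
          show ((stampF 0 A.init).rename _).predsPol false = ∅
          have hpos : ((stampF 0 A.init).rename
              (fun v : Empty => v.elim) : Fml D (ℕ × A.Q) (fun p => A.ar p.2) (ℕ × X)).Polarity
              true :=
            Fml.polarity_rename _ _ true (polarity_stampF 0 _ true A.init_pos)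
          simpa using Fml.predsPol_empty_of_polarity _ true hpos
        have hιfv : ι0.fv = ∅ := by
          rw [Set.eq_empty_iff_forall_notMem]
          intro v hv
          obtain ⟨u, -, -⟩ := Fml.fv_rename _ _ hv
          exact u.elim
        refine ⟨?_, ?_, ?_, s2⟩
        · exact s3.trans fun p hp => hι hp.1
        · rw [Set.eq_empty_iff_forall_notMem]
          intro p hp
          have h6 := (s6 hp).1
          rw [hιneg] at h6
          exact h6
        · rw [Set.eq_empty_iff_forall_notMem]
          intro v hv
          have h4 := (s4 hv).1
          rw [hιfv] at h4
          exact h4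
    | succ k ih =>
        intro hk1
        have hk : k < n := hk1
        obtain ⟨hp, hneg, hfv, huns⟩ := ih (Nat.le_of_lt hk)
        have hstepL : stepL k = A.stepFml k (α.get ⟨k, hk⟩) := dif_pos hk
        have hcond : ¬ ∃ (I : Interp D (ℕ × A.Q) (fun p => A.ar p.2)) (ν : (ℕ × X) → D),
            (Fml.and (Is k) (stepL k)).Sat I ν ∧ (Psi (k + 1)).Sat I ν := by
          rintro ⟨I, ν, hs, hpsi⟩
          rw [Fml.sat_and] at hs
          refine huns ⟨I, ν, hs.1, (hPsiStep k hk I ν).mpr ⟨?_, hpsi⟩⟩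
          rw [← hstepL]
          exact hs.2
        have hEq : Is (k + 1)
            = Classical.choose (lyndon (Fml.and (Is k) (stepL k)) (Psi (k + 1)) hcond) :=
          dif_pos hcond
        obtain ⟨s1, s2, s3, s4, s5, s6⟩ :=
          Classical.choose_spec (lyndon (Fml.and (Is k) (stepL k)) (Psi (k + 1)) hcond)
        obtain ⟨b1, b2, b3⟩ := hPsiBound (n - (k + 1)) (k + 1) (by omega)
        rw [hEq]
        refine ⟨?_, ?_, ?_, s2⟩
        · refine s3.trans ?_
          intro p hp'
          obtain ⟨hpl, hpr⟩ := hp'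
          have hble : k + 1 ≤ p.1 := b1 hpr
          simp only [Fml.preds] at hpl
          show p.1 = k + 1
          rcases hpl with h | h
          · have : p.1 = k := hp h
            omega
          · rw [hstepL] at h
            have h2 : p.1 = k ∨ p.1 = k + 1 := preds_stepFml A k _ h
            omega
        · rw [Set.eq_empty_iff_forall_notMem]
          intro p hp'
          obtain ⟨h6l, h6r⟩ := s6 hp'
          have hble : k + 1 ≤ p.1 := b2 h6r
          simp only [Fml.predsPol] at h6l
          rcases h6l with h | h
          · rw [hneg] at h
            exact h
          · rw [hstepL] at h
            have : p.1 = k := predsPolF_stepFml A k _ h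
            omega
        · rw [Set.eq_empty_iff_forall_notMem]
          intro v hv
          obtain ⟨h4l, h4r⟩ := s4 hv
          have hble : k + 2 ≤ v.1 := b3 h4r
          simp only [Fml.fv] at h4l
          rcases h4l with h | h
          · rw [hfv] at h
            exact h
          · rw [hstepL] at h
            have : v.1 = k + 1 := fv_stepFml A k _ h
            omega
  refine ⟨Is, ⟨?_, ?_, ?_, ?_⟩, ?_⟩
  · intro k hk
    exact (key k hk).2.1
  · intro I ν h
    have hIs0 : Is 0 = Classical.choose (lyndon ι0 (Psi 0) h0) := rfl
    rw [hIs0]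
    exact (Classical.choose_spec (lyndon ι0 (Psi 0) h0)).1 I ν h
  · intro k I ν h1 h2
    have hk : k.val < n := k.isLt
    obtain ⟨-, -, -, huns⟩ := key k.val (Nat.le_of_lt hk)
    have hstepL : stepL k.val = A.stepFml k.val (α.get ⟨k.val, hk⟩) := dif_pos hk
    have hcond : ¬ ∃ (I : Interp D (ℕ × A.Q) (fun p => A.ar p.2)) (ν : (ℕ × X) → D),
        (Fml.and (Is k.val) (stepL k.val)).Sat I ν ∧ (Psi (k.val + 1)).Sat I ν := by
      rintro ⟨I, ν, hs, hpsi⟩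
      rw [Fml.sat_and] at hs
      refine huns ⟨I, ν, hs.1, (hPsiStep k.val hk I ν).mpr ⟨?_, hpsi⟩⟩
      rw [← hstepL]
      exact hs.2
    have hEq : Is (k.val + 1)
        = Classical.choose (lyndon (Fml.and (Is k.val) (stepL k.val)) (Psi (k.val + 1)) hcond) :=
      dif_pos hcond
    rw [hEq]
    refine (Classical.choose_spec (lyndon _ _ hcond)).1 I ν ?_
    rw [Fml.sat_and, hstepL]
    refine ⟨h1, ?_⟩
    exact (Fml.sat_rename I id _ ν).mp h2
  · rintro ⟨I, ν, h1, h2⟩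
    obtain ⟨-, -, -, huns⟩ := key n le_rfl
    refine huns ⟨I, ν, h1, ?_⟩
    show (Fml.and (Fml.conj (List.drop n L)) (A.finalFml n)).Sat I ν
    rw [Fml.sat_and]
    constructor
    · rw [← hLlen, List.drop_length]
      exact Fml.sat_tt I ν
    · exact (Fml.sat_rename I id _ ν).mp h2
  · intro k hk
    obtain ⟨hp, -, hfv, -⟩ := key k hk
    exact ⟨hp, hfv⟩

end FOADA
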